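/- Reverse martingale property: under (D1)–(D4) and (A1)–(A2), for the process T₀(α) = Σ_{m∈𝓜₀} δ_m(A_m(α))/A_m(α) and the decreasing filtration 𝓕_α = σ(δ_m(A_m(β)) : β ∈ [α,1], m ∈ 𝓜), one has, for every 0 < α ≤ β ≤ 1, E_P[T₀(α) | 𝓕_β] = T₀(β) almost surely; i.e., {(T₀(α), 𝓕_α) : α ∈ (0,1]} is a reverse martingale under P. Moreover T₀(1) = |𝓜₀| a.e.-P, so E_P[T₀(1)] = |𝓜₀|. -/

import Mathlib

/-!
Statement 13: Reverse martingale property. Under (D1)–(D4) and (A1)–(A2), the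
process T₀(α) = Σ_{m∈𝓜₀} δ_m(A_m(α))/A_m(α) with the decreasing filtration
𝓕_α = σ(δ_m(A_m(β)) : β ∈ [α,1], m ∈ 𝓜) satisfies, for 0 < α ≤ β ≤ 1,
E_P[T₀(α) | 𝓕_β] = T₀(β) a.s.; moreover T₀(1) = |𝓜₀| a.e. so E_P[T₀(1)] = |𝓜₀|.
-/

open MeasureTheory ProbabilityTheory Function Set

noncomputable section

/-- The reverse-martingale process `T₀(α) = ∑_{m∈𝓜₀} δ_m(A_m(α))/A_m(α)`. -/
def Tzero {X ι : Type*} (M0 : Finset ι) (A : ι → ℝ → ℝ)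
    (δ : ι → ℝ → X → ℝ) (α : ℝ) (x : X) : ℝ :=
  ∑ m ∈ M0, δ m (A m α) x / A m α

/-- The (decreasing) filtration `𝓕_α = σ(δ_m(A_m(β)) : β ∈ [α,1], m ∈ 𝓜)`. -/
def filt {X ι : Type*} (A : ι → ℝ → ℝ) (δ : ι → ℝ → X → ℝ) (α : ℝ) :
    MeasurableSpace X :=
  ⨆ m, ⨆ β ∈ Set.Icc α 1, MeasurableSpace.comap (δ m (A m β)) Real.measurableSpace

/-- The σ-algebra generated by the decision process `α ↦ δ_m(α)`, `α ∈ [0,1]`. -/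
def procSigma {X : Type*} (δm : ℝ → X → ℝ) : MeasurableSpace X :=
  ⨆ α ∈ Set.Icc (0:ℝ) 1, MeasurableSpace.comap (δm α) Real.measurableSpace

/-!
Fix `m ∈ 𝓜₀` and levels `a = A_m(α) ≤ b = A_m(β)`, and write `E_c = {δ_m(c) = 1}`, so that
`P(E_c) = c` by (D4). By monotonicity (D2), almost every point of `E_b` also lies in `E_d` for all
`d ≥ b`, so every event generated by the levels `d ≥ b` of `δ_m` either contains `E_b` or misses
it, up to null sets. Such an event `h` therefore satisfies `P(E_b) P(E_a ∩ h) = P(E_a) P(E_b ∩ h)`.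
By (D3), `δ_m` is independent of all the other processes, so the identity extends to
`h ∩ k` with `k` generated by them, and by the π-λ theorem to all of `𝓕_β`. This says exactly
that `E[δ_m(a) / a | 𝓕_β] = δ_m(b) / b`; summing over `m ∈ 𝓜₀` gives the reverse martingale
property.
-/

open Filter MeasurableSpace

@[reducible]
def nonSplitting {X : Type*} (G : Set X) : MeasurableSpace X where
  MeasurableSet' s := G ⊆ s ∨ Disjoint G s
  measurableSet_empty := Or.inr (disjoint_empty G)
  measurableSet_compl s := by
    rintro (h | h)
    · exact Or.inr (disjoint_compl_right_iff_subset.mpr h)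
    · exact Or.inl h.subset_compl_right
  measurableSet_iUnion f hf := by
    by_cases h : ∃ i, G ⊆ f i
    · obtain ⟨i, hi⟩ := h
      exact Or.inl (hi.trans (subset_iUnion f i))
    · push Not at h
      exact Or.inr (disjoint_iUnion_right.mpr fun i => (hf i).resolve_left (h i))

section General

variable {X : Type*}

theorem comap_le_nonSplitting {Y : Type*} [mY : MeasurableSpace Y] {G : Set X} {f : X → Y}
    {y : Y} (hf : ∀ x ∈ G, f x = y) : mY.comap f ≤ nonSplitting G := by
  rintro _ ⟨t, -, rfl⟩
  by_cases hy : y ∈ t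
  · exact Or.inl fun x hx => by simpa [hf x hx] using hy
  · exact Or.inr (disjoint_left.mpr fun x hx hxt => hy (hf x hx ▸ hxt))

theorem measure_mul_measure_inter_comm_of_nonSplitting [MeasurableSpace X] {μ : Measure X}
    {E F G s : Set X} (hE : E ≤ᵐ[μ] G) (hF : F ≤ᵐ[μ] G) (hs : MeasurableSet[nonSplitting G] s) :
    μ F * μ (E ∩ s) = μ E * μ (F ∩ s) := by
  rcases hs with hGs | hGs
  · have inter_eq : ∀ {E : Set X}, E ≤ᵐ[μ] G → μ (E ∩ s) = μ E := fun hE =>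
      measure_congr <| (LE.le.eventuallyLE inter_subset_left).antisymm <| by
        filter_upwards [hE] with x hx hxE using ⟨hxE, hGs (hx hxE)⟩
    rw [inter_eq hE, inter_eq hF, mul_comm]
  · have inter_null : ∀ {E : Set X}, E ≤ᵐ[μ] G → μ (E ∩ s) = 0 := fun hE =>
      measure_mono_null_ae (ae_le_set_inter hE (EventuallyLE.refl _ s))
        (by rw [hGs.inter_eq, measure_empty])
    rw [inter_null hE, inter_null hF, mul_zero, mul_zero]

theorem isPiSystem_image2_inter {S T : Set (Set X)} (hS : IsPiSystem S) (hT : IsPiSystem T) :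
    IsPiSystem (image2 (· ∩ ·) S T) := by
  rintro _ ⟨s₁, hs₁, t₁, ht₁, rfl⟩ _ ⟨s₂, hs₂, t₂, ht₂, rfl⟩ hne
  rw [inter_inter_inter_comm] at hne ⊢
  exact mem_image2_of_mem (hS _ hs₁ _ hs₂ hne.left) (hT _ ht₁ _ ht₂ hne.right)

theorem generateFrom_image2_inter (m₁ m₂ : MeasurableSpace X) :
    generateFrom (image2 (· ∩ ·) {s | MeasurableSet[m₁] s} {t | MeasurableSet[m₂] t}) =
      m₁ ⊔ m₂ := by
  refine le_antisymm (generateFrom_le ?_) (sup_le (fun s hs => ?_) fun t ht => ?_)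
  · rintro _ ⟨s, hs, t, ht, rfl⟩
    exact (le_sup_left (b := m₂) s hs).inter (le_sup_right (a := m₁) t ht)
  · exact measurableSet_generateFrom ⟨s, hs, univ, .univ, inter_univ s⟩
  · exact measurableSet_generateFrom ⟨univ, .univ, t, ht, univ_inter t⟩

theorem isPiSystem_image2_inter_measurableSet (m₁ m₂ : MeasurableSpace X) :
    IsPiSystem (image2 (· ∩ ·) {s | MeasurableSet[m₁] s} {t | MeasurableSet[m₂] t}) :=
  isPiSystem_image2_inter (@isPiSystem_measurableSet _ m₁) (@isPiSystem_measurableSet _ m₂)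

theorem indep_sup_of_indep_of_indep_sup {m₁ m₂ m₃ mX : MeasurableSpace X} {μ : Measure X}
    [IsZeroOrProbabilityMeasure μ] (h₁ : m₁ ≤ mX) (h₂ : m₂ ≤ mX) (h₃ : m₃ ≤ mX)
    (h₁₂ : Indep m₁ m₂ μ) (h₁₂₃ : Indep (m₁ ⊔ m₂) m₃ μ) : Indep m₁ (m₂ ⊔ m₃) μ := by
  refine IndepSets.indep h₁ (sup_le h₂ h₃) (@isPiSystem_measurableSet _ m₁)
    (isPiSystem_image2_inter_measurableSet m₂ m₃) (@generateFrom_measurableSet _ m₁).symm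
    (generateFrom_image2_inter m₂ m₃).symm ?_
  rw [IndepSets_iff]
  rintro a _ ha ⟨s, hs, t, ht, rfl⟩
  rw [Indep_iff] at h₁₂ h₁₂₃
  calc μ (a ∩ (s ∩ t)) = μ (a ∩ s) * μ t := by
        rw [← inter_assoc]
        exact h₁₂₃ _ _ ((le_sup_left (b := m₂) a ha).inter (le_sup_right (a := m₁) s hs)) ht
    _ = μ a * μ (s ∩ t) := by
        rw [h₁₂ _ _ ha hs, h₁₂₃ _ _ (le_sup_right (a := m₁) s hs) ht, mul_assoc]

theorem eq_indicator_preimage_one {f : X → ℝ} (h : ∀ x, f x = 0 ∨ f x = 1) :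
    f = (f ⁻¹' {1}).indicator 1 := by
  funext x
  rcases h x with hx | hx <;> simp [hx]

variable {𝓕 𝓗 𝓛 𝓚 : MeasurableSpace X} [m₀ : MeasurableSpace X] {μ : Measure X}

theorem integrable_of_forall_eq_zero_or_one [IsFiniteMeasure μ] {f : X → ℝ} (hf : Measurable f)
    (h : ∀ x, f x = 0 ∨ f x = 1) : Integrable f μ := by
  rw [eq_indicator_preimage_one h]
  exact (integrable_const 1).indicator (hf (measurableSet_singleton 1))

variable {E F G : Set X}

theorem measure_mul_measure_inter_comm_of_indep [IsFiniteMeasure μ]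
    (h𝓛 : 𝓛 ≤ m₀) (h𝓚 : 𝓚 ≤ m₀) (hind : Indep 𝓛 𝓚 μ) (h𝓗𝓛 : 𝓗 ≤ 𝓛)
    (h𝓗G : 𝓗 ≤ nonSplitting G) (hE : MeasurableSet[𝓛] E) (hF : MeasurableSet[𝓛] F)
    (hEG : E ≤ᵐ[μ] G) (hFG : F ≤ᵐ[μ] G) {s : Set X} (hs : MeasurableSet[𝓗 ⊔ 𝓚] s) :
    μ F * μ (E ∩ s) = μ E * μ (F ∩ s) := by
  have smul_restrict_apply : ∀ {E : Set X}, MeasurableSet[𝓛] E → ∀ c t,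
      (c • μ.restrict E) t = c * μ (E ∩ t) := fun hE c t => by
    rw [Measure.smul_apply, Measure.restrict_apply' (h𝓛 _ hE), inter_comm, smul_eq_mul]
  have : IsFiniteMeasure (μ F • μ.restrict E) := ⟨by simp [ENNReal.mul_lt_top, measure_lt_top]⟩
  have h_ext := ext_on_measurableSpace_of_generate_finite m₀ (μ := μ F • μ.restrict E)
    (ν := μ E • μ.restrict F) _ ?_ (sup_le (h𝓗𝓛.trans h𝓛) h𝓚)
    (generateFrom_image2_inter 𝓗 𝓚).symm (isPiSystem_image2_inter_measurableSet 𝓗 𝓚) ?_ hs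
  · rwa [smul_restrict_apply hE, smul_restrict_apply hF] at h_ext
  · rintro _ ⟨h, hh, k, hk, rfl⟩
    rw [Indep_iff] at hind
    rw [smul_restrict_apply hE, smul_restrict_apply hF, ← inter_assoc, ← inter_assoc,
      hind _ _ (hE.inter (h𝓗𝓛 _ hh)) hk, hind _ _ (hF.inter (h𝓗𝓛 _ hh)) hk, ← mul_assoc,
      ← mul_assoc, measure_mul_measure_inter_comm_of_nonSplitting hEG hFG (h𝓗G _ hh)]
  · rw [smul_restrict_apply hE, smul_restrict_apply hF, inter_univ, inter_univ, mul_comm]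

theorem condExp_indicator_ae_eq_of_indep [IsFiniteMeasure μ]
    (h𝓛 : 𝓛 ≤ m₀) (h𝓚 : 𝓚 ≤ m₀) (hind : Indep 𝓛 𝓚 μ) (h𝓗𝓛 : 𝓗 ≤ 𝓛)
    (h𝓗G : 𝓗 ≤ nonSplitting G) (h𝓕 : 𝓕 ≤ 𝓗 ⊔ 𝓚) (hE : MeasurableSet[𝓛] E)
    (hF : MeasurableSet[𝓛] F) (hF𝓕 : MeasurableSet[𝓕] F) (hEG : E ≤ᵐ[μ] G) (hFG : F ≤ᵐ[μ] G)
    (hF0 : μ.real F ≠ 0) :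
    μ[E.indicator 1 | 𝓕] =ᵐ[μ] (μ.real E / μ.real F) • F.indicator (1 : X → ℝ) := by
  have h𝓕m : 𝓕 ≤ m₀ := h𝓕.trans (sup_le (h𝓗𝓛.trans h𝓛) h𝓚)
  refine (ae_eq_condExp_of_forall_setIntegral_eq h𝓕m ((integrable_const 1).indicator (h𝓛 _ hE))
    (fun s _ _ => (((integrable_const 1).indicator (h𝓛 _ hF)).smul _).integrableOn)
    (fun s hs _ => ?_)
    ((stronglyMeasurable_one.indicator hF𝓕).const_smul _).aestronglyMeasurable).symm
  have key := congrArg ENNReal.toReal <|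
    measure_mul_measure_inter_comm_of_indep h𝓛 h𝓚 hind h𝓗𝓛 h𝓗G hE hF hEG hFG (h𝓕 _ hs)
  simp only [ENNReal.toReal_mul, ← measureReal_def] at key
  simp only [Pi.smul_apply]
  rw [integral_smul, integral_indicator_one (h𝓛 _ hF), integral_indicator_one (h𝓛 _ hE),
    measureReal_restrict_apply (h𝓛 _ hF), measureReal_restrict_apply (h𝓛 _ hE), smul_eq_mul,
    div_mul_eq_mul_div, div_eq_iff hF0, ← key, mul_comm]

end General

section DecisionProcess

theorem comap_le_procSigma {X : Type*} (δm : ℝ → X → ℝ) {c : ℝ} (hc : c ∈ Icc (0:ℝ) 1) :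
    MeasurableSpace.comap (δm c) Real.measurableSpace ≤ procSigma δm :=
  le_iSup₂_of_le c hc le_rfl

variable {X : Type*} {𝓕 𝓚 : MeasurableSpace X} [m₀ : MeasurableSpace X] {P : Measure X}
  {δm : ℝ → X → ℝ}

theorem procSigma_le (h : ∀ c ∈ Icc (0:ℝ) 1, Measurable (δm c)) : procSigma δm ≤ m₀ :=
  iSup₂_le fun c hc => (h c hc).comap_le

theorem condExp_div_ae_eq_div_of_indep [IsFiniteMeasure P]
    (hmeas : ∀ c ∈ Icc (0:ℝ) 1, Measurable (δm c))
    (hvals : ∀ c ∈ Icc (0:ℝ) 1, ∀ x, δm c x = 0 ∨ δm c x = 1)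
    (hmono : ∀ᵐ x ∂P, MonotoneOn (fun c => δm c x) (Icc 0 1))
    (hmean : ∀ c ∈ Icc (0:ℝ) 1, ∫ x, δm c x ∂P = c)
    (h𝓚 : 𝓚 ≤ m₀) (hind : Indep (procSigma δm) 𝓚 P) {a b : ℝ} (ha : 0 < a) (hab : a ≤ b)
    (hb : b ≤ 1)
    (h𝓕 : 𝓕 ≤ (⨆ c ∈ Icc b 1, MeasurableSpace.comap (δm c) Real.measurableSpace) ⊔ 𝓚)
    (hb𝓕 : Measurable[𝓕] (δm b)) :
    P[fun x => δm a x / a | 𝓕] =ᵐ[P] fun x => δm b x / b := by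
  have ha01 : a ∈ Icc (0:ℝ) 1 := ⟨ha.le, hab.trans hb⟩
  have hb01 : b ∈ Icc (0:ℝ) 1 := ⟨ha.le.trans hab, hb⟩
  set E : ℝ → Set X := fun c => δm c ⁻¹' {1}
  have hδE : ∀ c ∈ Icc (0:ℝ) 1, δm c = (E c).indicator 1 := fun c hc =>
    eq_indicator_preimage_one (hvals c hc)
  have hE : ∀ c ∈ Icc (0:ℝ) 1, MeasurableSet[procSigma δm] (E c) := fun c hc =>
    comap_le_procSigma δm hc _ ⟨{1}, measurableSet_singleton 1, rfl⟩
  have hPE : ∀ c ∈ Icc (0:ℝ) 1, P.real (E c) = c := fun c hc => by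
    rw [← integral_indicator_one (procSigma_le hmeas _ (hE c hc)), ← hδE c hc, hmean c hc]
  set G : Set X := {x | ∀ d ∈ Icc b 1, δm d x = 1}
  have hEG : ∀ c ∈ Icc 0 b, E c ≤ᵐ[P] G := fun c hc => by
    filter_upwards [hmono] with x hx (hxc : δm c x = 1) d hd
    have hd01 : d ∈ Icc (0:ℝ) 1 := ⟨hb01.1.trans hd.1, hd.2⟩
    have hcd : δm c x ≤ δm d x := hx ⟨hc.1, hc.2.trans hb⟩ hd01 (hc.2.trans hd.1)
    rcases hvals d hd01 x with h | h
    · linarith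
    · exact h
  have hcond := condExp_indicator_ae_eq_of_indep (procSigma_le hmeas) h𝓚 hind
    (iSup₂_le fun c hc => comap_le_procSigma δm ⟨hb01.1.trans hc.1, hc.2⟩)
    (iSup₂_le fun c hc => comap_le_nonSplitting (G := G) fun x hx => hx c hc) h𝓕
    (hE a ha01) (hE b hb01) (hb𝓕 (measurableSet_singleton 1)) (hEG a ⟨ha.le, hab⟩)
    (hEG b ⟨hb01.1, le_rfl⟩) (by rw [hPE b hb01]; exact (ha.trans_le hab).ne')
  rw [hPE a ha01, hPE b hb01] at hcond
  have hdiv : ∀ c ∈ Icc (0:ℝ) 1, (fun x => δm c x / c) = c⁻¹ • (E c).indicator 1 :=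
    fun c hc => by
      rw [hδE c hc]
      funext x
      simp [div_eq_inv_mul]
  rw [hdiv a ha01, hdiv b hb01]
  refine (condExp_smul _ _ _).trans ?_
  filter_upwards [hcond] with x hx
  simp only [Pi.smul_apply, hx, smul_eq_mul]
  field_simp

end DecisionProcess

section DecisionFamily

variable {X ι : Type*} {δ : ι → ℝ → X → ℝ}

theorem indep_procSigma_iSup_ne [MeasurableSpace X] {P : Measure X} [IsProbabilityMeasure P]
    {M0 M1 : Finset ι} (hcover : ∀ n, n ∈ M0 ∨ n ∈ M1)
    (hmeas : ∀ m, ∀ c ∈ Icc (0:ℝ) 1, Measurable (δ m c))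
    (hD3a : Indep (⨆ m ∈ M0, procSigma (δ m)) (⨆ m ∈ M1, procSigma (δ m)) P)
    (hD3b : iIndep (fun m : {m // m ∈ M0} => procSigma (δ (m : ι))) P) {m : ι} (hm : m ∈ M0) :
    Indep (procSigma (δ m)) (⨆ n ∈ ({m}ᶜ : Set ι), procSigma (δ n)) P := by
  have h₀ : Indep (procSigma (δ m))
      (⨆ n ∈ ({⟨m, hm⟩}ᶜ : Set {m // m ∈ M0}), procSigma (δ (n : ι))) P := by
    simpa using indep_biSup_compl (fun n : {m // m ∈ M0} => procSigma_le (hmeas n)) hD3b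
      {⟨m, hm⟩}
  have h₁ : Indep (procSigma (δ m) ⊔
      ⨆ n ∈ ({⟨m, hm⟩}ᶜ : Set {m // m ∈ M0}), procSigma (δ (n : ι)))
      (⨆ n ∈ M1, procSigma (δ n)) P :=
    indep_of_indep_of_le_left hD3a <| sup_le (le_iSup₂_of_le m hm le_rfl) <|
      iSup₂_le fun n _ =>
        le_iSup₂_of_le (f := fun n (_ : n ∈ M0) => procSigma (δ n)) n.1 n.2 le_rfl
  refine indep_of_indep_of_le_right
    (indep_sup_of_indep_of_indep_sup (procSigma_le (hmeas m)) ?_ ?_ h₀ h₁)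
    (iSup₂_le fun n hn => ?_)
  · exact iSup₂_le fun n _ => procSigma_le (hmeas n)
  · exact iSup₂_le fun n _ => procSigma_le (hmeas n)
  by_cases hn0 : n ∈ M0
  · exact le_sup_of_le_left
      (le_iSup₂_of_le ⟨n, hn0⟩ (by simpa [Subtype.ext_iff] using hn) le_rfl)
  · exact le_sup_of_le_right (le_iSup₂_of_le n ((hcover n).resolve_left hn0) le_rfl)

theorem filt_le_sup {A : ι → ℝ → ℝ} {m : ι} {β : ℝ} (hβ : 0 ≤ β)
    (hArange : ∀ n, ∀ γ ∈ Icc (0:ℝ) 1, A n γ ∈ Icc (0:ℝ) 1) (hAm : MonotoneOn (A m) (Icc 0 1)) :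
    filt A δ β ≤ (⨆ c ∈ Icc (A m β) 1, MeasurableSpace.comap (δ m c) Real.measurableSpace) ⊔
      ⨆ n ∈ ({m}ᶜ : Set ι), procSigma (δ n) := by
  refine iSup_le fun n => iSup₂_le fun γ hγ => ?_
  have hγ01 : γ ∈ Icc (0:ℝ) 1 := ⟨hβ.trans hγ.1, hγ.2⟩
  by_cases hn : n = m
  · subst hn
    exact le_sup_of_le_left (le_iSup₂_of_le (A n γ)
      ⟨hAm ⟨hβ, hγ.1.trans hγ.2⟩ hγ01 hγ.1, (hArange n γ hγ01).2⟩ le_rfl)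
  · exact le_sup_of_le_right (le_iSup₂_of_le n hn (comap_le_procSigma _ (hArange n γ hγ01)))

theorem measurable_filt {A : ι → ℝ → ℝ} (m : ι) {β : ℝ} (hβ : β ≤ 1) :
    Measurable[filt A δ β] (δ m (A m β)) :=
  Measurable.of_comap_le (le_iSup_of_le m (le_iSup₂_of_le β ⟨le_rfl, hβ⟩ le_rfl))

theorem Tzero_one_ae_eq_card [MeasurableSpace X] {P : Measure X} {M0 : Finset ι}
    {A : ι → ℝ → ℝ} (hA1 : ∀ m, A m 1 = 1) (hδ1 : ∀ m ∈ M0, ∀ᵐ x ∂P, δ m 1 x = 1) :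
    ∀ᵐ x ∂P, Tzero M0 A δ 1 x = M0.card := by
  filter_upwards [(eventually_all_finset M0).mpr hδ1] with x hx
  rw [Tzero, Finset.sum_congr rfl fun m hm => by rw [hA1, hx m hm, div_one]]
  simp

end DecisionFamily

theorem Tzero_reverse_martingale_general
    {X ι : Type*} [MeasurableSpace X] [Fintype ι] [DecidableEq ι]
    (P : Measure X) [IsProbabilityMeasure P]
    (M0 M1 : Finset ι) (hpart : M0 ∪ M1 = Finset.univ)
    (δ : ι → ℝ → X → ℝ) (A : ι → ℝ → ℝ)
    (hmeas : ∀ m, ∀ α ∈ Set.Icc (0:ℝ) 1, Measurable (δ m α))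
    (hvals : ∀ m, ∀ α ∈ Set.Icc (0:ℝ) 1, ∀ x, δ m α x = 0 ∨ δ m α x = 1)
    -- (D1)
    (hD1 : ∀ m, ∀ᵐ x ∂P, δ m 0 x = 0 ∧ δ m 1 x = 1)
    -- (D2)
    (hD2 : ∀ᵐ x ∂P, ∀ m, MonotoneOn (fun α => δ m α x) (Set.Icc 0 1) ∧
      ∀ α ∈ Set.Ico (0:ℝ) 1, ContinuousWithinAt (fun β => δ m β x) (Set.Ici α) α)
    -- (D3)
    (hD3a : Indep (⨆ m ∈ M0, procSigma (δ m)) (⨆ m ∈ M1, procSigma (δ m)) P)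
    (hD3b : iIndep (fun m : {m // m ∈ M0} => procSigma (δ (m : ι))) P)
    -- (D4)
    (hD4 : ∀ m ∈ M0, ∀ α ∈ Set.Icc (0:ℝ) 1, ∫ x, δ m α x ∂P = α)
    -- (A1)–(A2)
    (hArange : ∀ m, ∀ α ∈ Set.Icc (0:ℝ) 1, A m α ∈ Set.Icc (0:ℝ) 1)
    (hA1 : ∀ m, A m 0 = 0 ∧ A m 1 = 1)
    (hA2 : ∀ m, ContinuousOn (A m) (Set.Icc 0 1) ∧ StrictMonoOn (A m) (Set.Icc 0 1)) :
    -- the reverse martingale property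
    (∀ α β : ℝ, 0 < α → α ≤ β → β ≤ 1 →
      P[Tzero M0 A δ α|filt A δ β] =ᵐ[P] Tzero M0 A δ β) ∧
    -- terminal value
    (∀ᵐ x ∂P, Tzero M0 A δ 1 x = M0.card) ∧
    ∫ x, Tzero M0 A δ 1 x ∂P = M0.card := by
  have hTerm : ∀ᵐ x ∂P, Tzero M0 A δ 1 x = M0.card :=
    Tzero_one_ae_eq_card (fun m => (hA1 m).2) fun m _ => (hD1 m).mono fun _ hx => hx.2
  refine ⟨fun α β hα hαβ hβ1 => ?_, hTerm, by simp [integral_congr_ae hTerm]⟩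
  have hα01 : α ∈ Icc (0:ℝ) 1 := ⟨hα.le, hαβ.trans hβ1⟩
  have hβ01 : β ∈ Icc (0:ℝ) 1 := ⟨hα.le.trans hαβ, hβ1⟩
  have hTsum : ∀ γ, Tzero M0 A δ γ = ∑ m ∈ M0, fun x => δ m (A m γ) x / A m γ := fun γ => by
    ext x; simp [Tzero]
  have hcoord : ∀ m ∈ M0, P[fun x => δ m (A m α) x / A m α | filt A δ β] =ᵐ[P]
      fun x => δ m (A m β) x / A m β := fun m hm =>
    condExp_div_ae_eq_div_of_indep (hmeas m) (hvals m)
      (by filter_upwards [hD2] with x hx using (hx m).1) (hD4 m hm)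
      (iSup₂_le fun n _ => procSigma_le (hmeas n))
      (indep_procSigma_iSup_ne (fun n => Finset.mem_union.mp (hpart ▸ Finset.mem_univ n))
        hmeas hD3a hD3b hm)
      ((hA1 m).1 ▸ (hA2 m).2 ⟨le_rfl, zero_le_one⟩ hα01 hα)
      ((hA2 m).2.monotoneOn hα01 hβ01 hαβ) (hArange m β hβ01).2
      (filt_le_sup hβ01.1 hArange (hA2 m).2.monotoneOn) (measurable_filt m hβ1)
  rw [hTsum α, hTsum β]
  refine (condExp_finsetSum (fun m _ => ?_) _).trans ?_
  · exact (integrable_of_forall_eq_zero_or_one (hmeas m _ (hArange m α hα01))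
      (hvals m _ (hArange m α hα01))).div_const _
  · filter_upwards [(eventually_all_finset M0).mpr hcoord] with x hx
    simp only [Finset.sum_apply]
    exact Finset.sum_congr rfl hx

/-- **Reverse martingale property of `T₀`.** -/
theorem Tzero_reverse_martingale
    {X ι : Type*} [MeasurableSpace X] [Fintype ι] [DecidableEq ι] [Nonempty ι]
    (P : Measure X) [IsProbabilityMeasure P]
    (M0 M1 : Finset ι) (hpart : M0 ∪ M1 = Finset.univ) (hdisj : Disjoint M0 M1)
    (δ : ι → ℝ → X → ℝ) (A : ι → ℝ → ℝ)
    (hmeas : ∀ m, ∀ α ∈ Set.Icc (0:ℝ) 1, Measurable (δ m α))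
    (hvals : ∀ m, ∀ α ∈ Set.Icc (0:ℝ) 1, ∀ x, δ m α x = 0 ∨ δ m α x = 1)
    -- (D1)
    (hD1 : ∀ m, ∀ᵐ x ∂P, δ m 0 x = 0 ∧ δ m 1 x = 1)
    -- (D2)
    (hD2 : ∀ᵐ x ∂P, ∀ m, MonotoneOn (fun α => δ m α x) (Set.Icc 0 1) ∧
      ∀ α ∈ Set.Ico (0:ℝ) 1, ContinuousWithinAt (fun β => δ m β x) (Set.Ici α) α)
    -- (D3)
    (hD3a : Indep (⨆ m ∈ M0, procSigma (δ m)) (⨆ m ∈ M1, procSigma (δ m)) P)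
    (hD3b : iIndep (fun m : {m // m ∈ M0} => procSigma (δ (m : ι))) P)
    -- (D4)
    (hD4 : ∀ m ∈ M0, ∀ α ∈ Set.Icc (0:ℝ) 1, ∫ x, δ m α x ∂P = α)
    -- (A1)–(A2)
    (hArange : ∀ m, ∀ α ∈ Set.Icc (0:ℝ) 1, A m α ∈ Set.Icc (0:ℝ) 1)
    (hA1 : ∀ m, A m 0 = 0 ∧ A m 1 = 1)
    (hA2 : ∀ m, ContinuousOn (A m) (Set.Icc 0 1) ∧ StrictMonoOn (A m) (Set.Icc 0 1)) :
    -- the reverse martingale property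
    (∀ α β : ℝ, 0 < α → α ≤ β → β ≤ 1 →
      P[Tzero M0 A δ α|filt A δ β] =ᵐ[P] Tzero M0 A δ β) ∧
    -- terminal value
    (∀ᵐ x ∂P, Tzero M0 A δ 1 x = M0.card) ∧
    ∫ x, Tzero M0 A δ 1 x ∂P = M0.card :=
  Tzero_reverse_martingale_general P M0 M1 hpart δ A hmeas hvals hD1 hD2 hD3a hD3b hD4 hArange hA1
    hA2

end
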